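/- Suppose the set ν(Ψ_α) of values of key polynomials of degree α has no maximum. Then there exist a positive integer b_∞ and a final subset Ψ ⊆ Ψ_α such that for every Q ∈ Ψ, I(Q) = {b_∞}. -/

import Mathlib

open Polynomial

variable {K : Type*} [Field K]

/-- `ν` is a (rank one, real-valued) valuation on `K[x]`, specified on nonzero
polynomials. -/
def IsVal {K : Type*} [Field K] (ν : Polynomial K → ℝ) : Prop :=
  (∀ f g : Polynomial K, f ≠ 0 → g ≠ 0 → ν (f * g) = ν f + ν g) ∧
  (∀ f g : Polynomial K, f ≠ 0 → g ≠ 0 → f + g ≠ 0 → min (ν f) (ν g) ≤ ν (f + g))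

/-- The level `ε(f)` of a nonzero polynomial: the maximum of
`(ν f - ν (∂_b f))/b` over `b ≥ 1` (with `∂_b` the Hasse derivatives). -/
noncomputable def eps {K : Type*} [Field K] (ν : Polynomial K → ℝ) (f : Polynomial K) : ℝ :=
  sSup {r : ℝ | ∃ b : ℕ, 1 ≤ b ∧ hasseDeriv b f ≠ 0 ∧ r = (ν f - ν (hasseDeriv b f)) / b}

/-- The set `I(f)` of indices where the bound `ν(∂_b f) ≥ ν f - b ε(f)` is an equality. -/
def Iset {K : Type*} [Field K] (ν : Polynomial K → ℝ) (f : Polynomial K) : Set ℕ :=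
  {b | 1 ≤ b ∧ hasseDeriv b f ≠ 0 ∧ ν (hasseDeriv b f) = ν f - b * eps ν f}

/-- `Q` is a key polynomial for `ν`. -/
def IsKeyPol {K : Type*} [Field K] (ν : Polynomial K → ℝ) (Q : Polynomial K) : Prop :=
  Q.Monic ∧ 0 < Q.natDegree ∧
    ∀ f : Polynomial K, f ≠ 0 → f.natDegree < Q.natDegree → eps ν f < eps ν Q

/-- The coefficients of the `Q`-expansion of `f`:  `f = Σ i, qc Q f i * Q ^ i`
with `deg (qc Q f i) < deg Q`. -/
noncomputable def qc {K : Type*} [Field K] (Q : Polynomial K) : Polynomial K → ℕ → Polynomial K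
  | f, 0 => f %ₘ Q
  | f, (i + 1) => qc Q (f /ₘ Q) i

/-- The degree of the `Q`-expansion of `f`. -/
def degQ {K : Type*} [Field K] (Q f : Polynomial K) : ℕ := f.natDegree / Q.natDegree

/-- The truncation `ν_Q(f) = min_i ν (f_i Q^i)` of `ν` at `Q`. -/
noncomputable def nuQ {K : Type*} [Field K] (ν : Polynomial K → ℝ) (Q f : Polynomial K) : ℝ :=
  sInf {r : ℝ | ∃ i : ℕ, qc Q f i ≠ 0 ∧ r = ν (qc Q f i * Q ^ i)}

/-- The set `S_Q(f)` of indices attaining the minimum in `ν_Q(f)`. -/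
def SQ {K : Type*} [Field K] (ν : Polynomial K → ℝ) (Q f : Polynomial K) : Set ℕ :=
  {i | qc Q f i ≠ 0 ∧ ν (qc Q f i * Q ^ i) = nuQ ν Q f}

/-- `δ_Q(f) = max S_Q(f)`. -/
noncomputable def deltaQ {K : Type*} [Field K] (ν : Polynomial K → ℝ) (Q f : Polynomial K) : ℕ :=
  sSup (SQ ν Q f)

/-- The set `Ψ_α` of key polynomials for `ν` of degree `α`. -/
def Psi {K : Type*} [Field K] (ν : Polynomial K → ℝ) (α : ℕ) : Set (Polynomial K) :=
  {Q | IsKeyPol ν Q ∧ Q.natDegree = α}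

/-- The set `S_α` of (nonzero) polynomials whose value is not computed by any
truncation at a key polynomial of degree `α`. -/
def Slim {K : Type*} [Field K] (ν : Polynomial K → ℝ) (α : ℕ) : Set (Polynomial K) :=
  {f | f ≠ 0 ∧ ∀ Q ∈ Psi ν α, nuQ ν Q f < ν f}

/-- `p` is the characteristic exponent of the residue field of `ν`: either `p = 1`
and all nonzero natural numbers have value `0`, or `p` is a prime, `p` has
positive value (or is `0` in `K`), and naturals prime to `p` have value `0`. -/
def CharExp {K : Type*} [Field K] (ν : Polynomial K → ℝ) (p : ℕ) : Prop :=
  (p = 1 ∧ ∀ n : ℕ, (n : Polynomial K) ≠ 0 → ν (n : Polynomial K) = 0) ∨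
  (p.Prime ∧ ((p : Polynomial K) = 0 ∨ 0 < ν (p : Polynomial K)) ∧
    ∀ n : ℕ, ¬ p ∣ n → ν (n : Polynomial K) = 0)


section Aux

variable {K : Type*} [Field K]

lemma IsVal.val_one {ν : Polynomial K → ℝ} (hν : IsVal ν) : ν 1 = 0 := by
  have := hν.1 1 1 one_ne_zero one_ne_zero
  rw [mul_one] at this
  linarith

lemma IsVal.val_neg {ν : Polynomial K → ℝ} (hν : IsVal ν) (f : Polynomial K) (hf : f ≠ 0) :
    ν (-f) = ν f := by
  have hm1 : (-1 : Polynomial K) ≠ 0 := by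
    intro h
    have : (1 : Polynomial K) = 0 := by linear_combination -h
    exact one_ne_zero this
  have h1 : ν (-1 : Polynomial K) = 0 := by
    have := hν.1 (-1) (-1) hm1 hm1
    rw [neg_mul_neg, one_mul, hν.val_one] at this
    linarith
  have := hν.1 (-1) f hm1 hf
  rw [neg_one_mul] at this
  rw [this, h1, zero_add]

/-- If `ν f < ν g` then `f + g ≠ 0` and `ν (f + g) = ν f`. -/
lemma IsVal.val_add_left {ν : Polynomial K → ℝ} (hν : IsVal ν) {f g : Polynomial K}
    (hf : f ≠ 0) (hg : g ≠ 0) (h : ν f < ν g) : f + g ≠ 0 ∧ ν (f + g) = ν f := by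
  have hfg : f + g ≠ 0 := by
    intro hfg
    have : g = -f := by linear_combination hfg
    rw [this, hν.val_neg f hf] at h
    exact lt_irrefl _ h
  refine ⟨hfg, ?_⟩
  have h1 : min (ν f) (ν g) ≤ ν (f + g) := hν.2 f g hf hg hfg
  rw [min_eq_left h.le] at h1
  rcases h1.lt_or_eq with h2 | h2
  · exfalso
    have hfeq : (f + g) + (-g) = f := by ring
    have h3 : min (ν (f + g)) (ν (-g)) ≤ ν ((f + g) + (-g)) :=
      hν.2 (f + g) (-g) hfg (neg_ne_zero.mpr hg) (by rw [hfeq]; exact hf)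
    rw [hfeq, hν.val_neg g hg] at h3
    exact absurd (lt_of_lt_of_le (lt_min h2 h) h3) (lt_irrefl _)
  · exact h2.symm

/-- The set over which `eps` takes a supremum. -/
def epsSet (ν : Polynomial K → ℝ) (f : Polynomial K) : Set ℝ :=
  {r : ℝ | ∃ b : ℕ, 1 ≤ b ∧ hasseDeriv b f ≠ 0 ∧ r = (ν f - ν (hasseDeriv b f)) / b}

lemma eps_eq_sSup (ν : Polynomial K → ℝ) (f : Polynomial K) :
    eps ν f = sSup (epsSet ν f) := rfl

lemma epsSet_finite (ν : Polynomial K → ℝ) (f : Polynomial K) : (epsSet ν f).Finite := by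
  apply Set.Finite.subset (((Set.finite_Icc 1 f.natDegree).image
    (fun b : ℕ => (ν f - ν (hasseDeriv b f)) / b)))
  rintro r ⟨b, hb1, hbne, rfl⟩
  refine ⟨b, ⟨hb1, ?_⟩, rfl⟩
  by_contra h
  exact hbne (f.hasseDeriv_eq_zero_of_lt_natDegree b (lt_of_not_ge h))

lemma epsSet_nonempty (ν : Polynomial K → ℝ) {f : Polynomial K} (hf : f ≠ 0)
    (hd : 1 ≤ f.natDegree) : (epsSet ν f).Nonempty := by
  refine ⟨(ν f - ν (hasseDeriv f.natDegree f)) / f.natDegree, f.natDegree, hd, ?_, rfl⟩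
  intro h
  have hc : (hasseDeriv f.natDegree f).coeff 0 = f.coeff f.natDegree := by
    rw [Polynomial.hasseDeriv_coeff, zero_add, Nat.choose_self, Nat.cast_one, one_mul]
  rw [h, Polynomial.coeff_zero] at hc
  exact (Polynomial.leadingCoeff_ne_zero.mpr hf) hc.symm

/-- The general lower bound `ν (∂_b f) ≥ ν f - b ε(f)`. -/
lemma val_hasseDeriv_ge (ν : Polynomial K → ℝ) {f : Polynomial K} {b : ℕ} (hb : 1 ≤ b)
    (hne : hasseDeriv b f ≠ 0) : ν f - b * eps ν f ≤ ν (hasseDeriv b f) := by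
  have hmem : (ν f - ν (hasseDeriv b f)) / b ∈ epsSet ν f := ⟨b, hb, hne, rfl⟩
  have hle : (ν f - ν (hasseDeriv b f)) / b ≤ eps ν f :=
    le_csSup (epsSet_finite ν f).bddAbove hmem
  have hb0 : (0 : ℝ) < b := by exact_mod_cast hb
  rw [div_le_iff₀ hb0] at hle
  linarith

lemma Iset_nonempty (ν : Polynomial K → ℝ) {f : Polynomial K} (hf : f ≠ 0)
    (hd : 1 ≤ f.natDegree) : (Iset ν f).Nonempty := by
  have hmem : eps ν f ∈ epsSet ν f :=
    (epsSet_nonempty ν hf hd).csSup_mem (epsSet_finite ν f)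
  obtain ⟨b, hb1, hbne, heq⟩ := hmem
  have hb0 : (0 : ℝ) < b := by exact_mod_cast hb1
  refine ⟨b, hb1, hbne, ?_⟩
  rw [heq]
  field_simp
  ring

/-- Key comparison lemma : if `Q, Q' ∈ Ψ_α` and `ν Q < ν Q'`, then every element of
`I(Q')` is at most `min I(Q)`. -/
lemma Iset_le_sInf_of_lt {ν : Polynomial K → ℝ} (hν : IsVal ν) {α : ℕ}
    {Q Q' : Polynomial K} (hQ : Q ∈ Psi ν α) (hQ' : Q' ∈ Psi ν α) (hlt : ν Q < ν Q') :
    ∀ b ∈ Iset ν Q', b ≤ sInf (Iset ν Q) := by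
  obtain ⟨⟨hQm, hQd, hQkey⟩, hQα⟩ := hQ
  obtain ⟨⟨hQ'm, hQ'd, _⟩, hQ'α⟩ := hQ'
  have hQ0 : Q ≠ 0 := hQm.ne_zero
  have hQ'0 : Q' ≠ 0 := hQ'm.ne_zero
  set a : Polynomial K := Q' - Q with ha_def
  have hQ'eq : Q' = Q + a := by ring
  have ha0 : a ≠ 0 := by
    intro h
    rw [ha_def, sub_eq_zero] at h
    rw [h] at hlt
    exact lt_irrefl _ hlt
  -- degree of a is < degree of Q
  have hdeg : a.natDegree < Q.natDegree := by
    have hdlt : a.degree < Q'.degree := by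
      apply Polynomial.degree_sub_lt _ hQ'0
      · rw [hQ'm.leadingCoeff, hQm.leadingCoeff]
      · rw [Polynomial.degree_eq_natDegree hQ'0, Polynomial.degree_eq_natDegree hQ0, hQα, hQ'α]
    have := Polynomial.natDegree_lt_natDegree ha0 hdlt
    rwa [hQ'α, ← hQα] at this
  -- ν a = ν Q
  have hva : ν a = ν Q := by
    rcases lt_trichotomy (ν a) (ν Q) with h | h | h
    · exfalso
      have h2 := (hν.val_add_left ha0 hQ0 h).2
      rw [add_comm] at h2
      rw [← hQ'eq] at h2
      linarith
    · exact h
    · exfalso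
      have h2 := (hν.val_add_left hQ0 ha0 h).2
      rw [← hQ'eq] at h2
      linarith
  have hepsa : eps ν a < eps ν Q := hQkey a ha0 hdeg
  -- derivatives of Q' at b ∈ I(Q)
  have hder : ∀ b ∈ Iset ν Q,
      hasseDeriv b Q' ≠ 0 ∧ ν (hasseDeriv b Q') = ν Q - b * eps ν Q := by
    rintro b ⟨hb1, hbQ, hbQv⟩
    have hsum : hasseDeriv b Q' = hasseDeriv b Q + hasseDeriv b a := by
      rw [hQ'eq, map_add]
    by_cases hba : hasseDeriv b a = 0
    · rw [hsum, hba, add_zero]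
      exact ⟨hbQ, hbQv⟩
    · have hb0 : (0 : ℝ) < b := by exact_mod_cast hb1
      have h1 : ν a - b * eps ν a ≤ ν (hasseDeriv b a) := val_hasseDeriv_ge ν hb1 hba
      have h2 : ν (hasseDeriv b Q) < ν (hasseDeriv b a) := by
        rw [hbQv]
        have : b * eps ν a < b * eps ν Q := by
          exact mul_lt_mul_of_pos_left hepsa hb0
        rw [hva] at h1
        linarith
      have h3 := hν.val_add_left hbQ hba h2
      rw [← hsum] at h3
      exact ⟨h3.1, by rw [h3.2, hbQv]⟩
  -- I(Q) is nonempty; let b₀ be its minimum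
  have hQdeg1 : 1 ≤ Q.natDegree := hQd
  have hIQ : (Iset ν Q).Nonempty := Iset_nonempty ν hQ0 hQdeg1
  set b₀ : ℕ := sInf (Iset ν Q) with hb₀_def
  have hb₀mem : b₀ ∈ Iset ν Q := Nat.sInf_mem hIQ
  obtain ⟨hb₀1, _, _⟩ := hb₀mem
  have hb₀0 : (0 : ℝ) < b₀ := by exact_mod_cast hb₀1
  obtain ⟨hD'0, hD'v⟩ := hder b₀ (Nat.sInf_mem hIQ)
  -- lower bound for eps Q'
  have hepsQ' : (ν Q' - ν Q) / b₀ + eps ν Q ≤ eps ν Q' := by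
    have hmem : (ν Q' - ν (hasseDeriv b₀ Q')) / b₀ ∈ epsSet ν Q' := ⟨b₀, hb₀1, hD'0, rfl⟩
    have hle : (ν Q' - ν (hasseDeriv b₀ Q')) / b₀ ≤ eps ν Q' :=
      le_csSup (epsSet_finite ν Q').bddAbove hmem
    rw [hD'v] at hle
    have : (ν Q' - (ν Q - ↑b₀ * eps ν Q)) / ↑b₀ = (ν Q' - ν Q) / ↑b₀ + eps ν Q := by
      field_simp
      ring
    rwa [this] at hle
  -- now take b ∈ I(Q')
  rintro b ⟨hb1, hbQ', hbQ'v⟩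
  have hb0 : (0 : ℝ) < b := by exact_mod_cast hb1
  have hsum : hasseDeriv b Q' = hasseDeriv b Q + hasseDeriv b a := by
    rw [hQ'eq, map_add]
  -- general lower bound ν(∂_b Q') ≥ ν Q - b eps Q
  have hlow : ν Q - b * eps ν Q ≤ ν (hasseDeriv b Q') := by
    have haux : ∀ hba : hasseDeriv b a ≠ 0, ν Q - b * eps ν Q ≤ ν (hasseDeriv b a) := by
      intro hba
      have h1 := val_hasseDeriv_ge ν hb1 hba
      rw [hva] at h1
      have : b * eps ν a ≤ b * eps ν Q := by
        exact mul_le_mul_of_nonneg_left hepsa.le hb0.le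
      linarith
    by_cases hbQ : hasseDeriv b Q = 0
    · by_cases hba : hasseDeriv b a = 0
      · exfalso
        rw [hsum, hbQ, hba, add_zero] at hbQ'
        exact hbQ' rfl
      · rw [hsum, hbQ, zero_add]
        exact haux hba
    · by_cases hba : hasseDeriv b a = 0
      · rw [hsum, hba, add_zero]
        exact val_hasseDeriv_ge ν hb1 hbQ
      · have hmin := hν.2 (hasseDeriv b Q) (hasseDeriv b a) hbQ hba (by rw [← hsum]; exact hbQ')
        rw [← hsum] at hmin
        refine le_trans (le_min (val_hasseDeriv_ge ν hb1 hbQ) (haux hba)) hmin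
  -- conclude b ≤ b₀
  rw [hbQ'v] at hlow
  have hmul : (b : ℝ) * ((ν Q' - ν Q) / b₀ + eps ν Q) ≤ b * eps ν Q' :=
    mul_le_mul_of_nonneg_left hepsQ' hb0.le
  have hδ : 0 < ν Q' - ν Q := by linarith
  have hfin : (b : ℝ) * ((ν Q' - ν Q) / b₀) ≤ ν Q' - ν Q := by linarith
  have : (b : ℝ) ≤ b₀ := by
    rw [← mul_div_assoc, div_le_iff₀ hb₀0] at hfin
    nlinarith
  exact_mod_cast this

end Aux

/-- If `ν(Ψ_α)` is bounded and has no maximum, there are `b_∞` and a final subset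
of `Ψ_α` on which `I(Q) = {b_∞}`. -/
theorem exists_final_Iset_singleton (ν : Polynomial K → ℝ) (hν : IsVal ν) (α : ℕ)
    (hne : (Psi ν α).Nonempty) (hbdd : BddAbove (ν '' Psi ν α))
    (hnomax : ∀ Q ∈ Psi ν α, ∃ Q' ∈ Psi ν α, ν Q < ν Q') :
    ∃ binf : ℕ, ∃ Q₀ ∈ Psi ν α, ∀ Q ∈ Psi ν α, ν Q₀ ≤ ν Q →
      Iset ν Q = {binf} := by
  -- B = minimal value of min I(Q) over Q ∈ Ψ_α
  classical
  set T : Set ℕ := {n | ∃ Q ∈ Psi ν α, n = sInf (Iset ν Q)} with hT_def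
  obtain ⟨Qw, hQw⟩ := hne
  have hTne : T.Nonempty := ⟨sInf (Iset ν Qw), Qw, hQw, rfl⟩
  have hBmem : sInf T ∈ T := Nat.sInf_mem hTne
  obtain ⟨Qs, hQs, hQsB⟩ := hBmem
  obtain ⟨Q₀, hQ₀, hQ₀lt⟩ := hnomax Qs hQs
  refine ⟨sInf T, Q₀, hQ₀, ?_⟩
  intro Q hQ hle
  have hlt : ν Qs < ν Q := lt_of_lt_of_le hQ₀lt hle
  have hQ0 : Q ≠ 0 := hQ.1.1.ne_zero
  have hQd1 : 1 ≤ Q.natDegree := hQ.1.2.1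
  have hIQne : (Iset ν Q).Nonempty := Iset_nonempty ν hQ0 hQd1
  have hub : ∀ b ∈ Iset ν Q, b ≤ sInf (Iset ν Qs) :=
    Iset_le_sInf_of_lt hν hQs hQ hlt
  have hlb : sInf T ≤ sInf (Iset ν Q) := Nat.sInf_le ⟨Q, hQ, rfl⟩
  ext b
  simp only [Set.mem_singleton_iff]
  constructor
  · intro hb
    have h1 : b ≤ sInf (Iset ν Qs) := hub b hb
    have h2 : sInf (Iset ν Q) ≤ b := Nat.sInf_le hb
    rw [← hQsB] at h1
    omega
  · intro hb
    subst hb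
    have hmem : sInf (Iset ν Q) ∈ Iset ν Q := Nat.sInf_mem hIQne
    have h1 : sInf (Iset ν Q) ≤ sInf (Iset ν Qs) := hub _ hmem
    rw [← hQsB] at h1
    have : sInf (Iset ν Q) = sInf T := le_antisymm h1 hlb
    rwa [this] at hmem
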